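/- arXiv:2308.03623 — 3 statements merged into one kernel-verified Lean document; each statement's English description precedes it below -/
import Mathlib

section
/- Lossless multiplication: let x be representable with 2^E ≤ x < 2^(E+1), let M ≥ 2 be a real scale factor, let y* = x·M, and let y be any representable number with |y − y*| ≤ ULP(y)/2 (round-to-nearest of the product) such that 2^(E+1) ≤ y < 2^(E+2). Then |x − y/M| < ULP(x)/2, and hence rounding y/M to the nearest representable number recovers x exactly. -/
/-- Lossless multiplication: `x` representable in `[2^E, 2^(E+1))`, `M ≥ 2`,
`y` a representable round-to-nearest of `x·M` in `[2^(E+1), 2^(E+2))`.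
Then `|x − y/M| < ULP(x)/2` and rounding `y/M` to nearest recovers `x`. -/
theorem stmt_6 (E : ℤ) (x M y : ℝ)
    (hxrep : ∃ k : ℤ, x = (k:ℝ) * (2:ℝ)^(E-52))
    (hx1 : (2:ℝ)^E ≤ x) (hx2 : x < (2:ℝ)^(E+1))
    (hM : 2 ≤ M)
    (hyrep : ∃ c : ℤ, y = (c:ℝ) * (2:ℝ)^(E-51))
    (hround : |y - x * M| ≤ (2:ℝ)^(E-51) / 2)
    (hy1 : (2:ℝ)^(E+1) ≤ y) (hy2 : y < (2:ℝ)^(E+2)) :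
    |x - y / M| < (2:ℝ)^(E-52) / 2 ∧
    ∀ x' : ℝ, (∃ k' : ℤ, x' = (k':ℝ) * (2:ℝ)^(E-52)) → x' ≠ x →
      |y / M - x| < |y / M - x'| := by
  obtain ⟨k, hk⟩ := hxrep
  obtain ⟨c, hc⟩ := hyrep
  set u : ℝ := (2:ℝ)^(E-52) with hu_def
  have hu : (0:ℝ) < u := zpow_pos (by norm_num) _
  have h2u : (2:ℝ)^(E-51) = 2 * u := by
    rw [hu_def, show E - 51 = 1 + (E - 52) by ring, zpow_add₀ (by norm_num : (2:ℝ) ≠ 0)]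
    norm_num
  have hM0 : (0:ℝ) < M := by linarith
  have hround' : |y - x * M| ≤ u := by rw [h2u] at hround; linarith
  have habs : |x - y / M| = |x * M - y| / M := by
    rw [show x - y / M = (x * M - y) / M by field_simp, abs_div, abs_of_pos hM0]
  have hmain : |x - y / M| < u / 2 := by
    rcases lt_or_eq_of_le hM with hM' | hM'
    · rw [habs]
      have h1 : |x * M - y| ≤ u := by rw [abs_sub_comm]; exact hround'
      calc |x * M - y| / M ≤ u / M := by gcongr
        _ < u / 2 := div_lt_div_of_pos_left hu (by norm_num) hM'
    · -- M = 2
      subst hM'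
      have hy2x : y - x * 2 = ((c : ℝ) - k) * (2 * u) := by
        rw [hk, hc, h2u]; ring
      have hck : c = k := by
        by_contra h
        have h1 : (1:ℝ) ≤ |(c : ℝ) - k| := by
          calc (1:ℝ) ≤ |((c - k : ℤ) : ℝ)| := by
                rw [← Int.cast_abs]
                exact_mod_cast Int.one_le_abs (sub_ne_zero.mpr h)
            _ = |(c : ℝ) - k| := by push_cast; ring_nf
        have h2 : 2 * u ≤ |y - x * 2| := by
          rw [hy2x, abs_mul, abs_of_pos (by linarith : (0:ℝ) < 2 * u)]
          nlinarith
        linarith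
      have hy : y = x * 2 := by
        have : y - x * 2 = 0 := by rw [hy2x, hck]; ring
        linarith
      rw [show x - y / 2 = 0 by rw [hy]; ring]
      simpa using by positivity
  refine ⟨hmain, ?_⟩
  rintro x' ⟨k', hk'⟩ hne
  have hkk : k ≠ k' := by rintro rfl; exact hne (hk'.trans hk.symm)
  have hxx' : u ≤ |x - x'| := by
    rw [hk, hk', ← sub_mul, abs_mul, abs_of_pos hu]
    have : (1:ℝ) ≤ |(k : ℝ) - k'| := by
      calc (1:ℝ) ≤ |((k - k' : ℤ) : ℝ)| := by
            rw [← Int.cast_abs]; exact_mod_cast Int.one_le_abs (sub_ne_zero.mpr hkk)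
        _ = |(k : ℝ) - k'| := by push_cast; ring_nf
    nlinarith
  have h1 : |y / M - x| < u / 2 := by rw [abs_sub_comm]; exact hmain
  have h2 : |x - x'| ≤ |x - y / M| + |y / M - x'| := abs_sub_le _ _ _
  rw [abs_sub_comm] at h1
  calc |y / M - x| = |x - y / M| := abs_sub_comm _ _
    _ < u / 2 := h1
    _ < |y / M - x'| := by
        have := abs_sub_comm x (y / M)
        nlinarith [h2, hxx', h1]
end

section
/- Sharpness of the multiplication condition: the inequality |y − y*| < M·ULP(x)/2, where y* = x·M and y is the rounded product, is sufficient for y/M to round back to x; and when M ≥ 2, round-to-nearest always guarantees |y − y*| ≤ ULP(y)/2 = ULP(x) ≤ M·ULP(x)/2, with strict inequality |y − y*| < M·ULP(x)/2 whenever M > 2 or the rounding is non-exact-boundary; in particular for all real M ≥ 2, if |y − y*| ≤ ULP(x) and x, y are grid points of spacings ULP(x), 2·ULP(x) respectively, then |x − y/M| ≤ ULP(x)/M ≤ ULP(x)/2 < ULP(x), so x is the unique nearest grid point to y/M when M > 2. -/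
/-- Sharpness of the multiplication condition: for `M ≥ 2`, if `x` and `y` are
grid points of spacings `u = ULP(x)` and `2u` respectively and
`|y − x·M| ≤ u`, then `|x − y/M| ≤ u/M ≤ u/2 < u`; and when `M > 2`, `x` is
the unique nearest grid point to `y/M`. -/
theorem stmt_7 (E : ℤ) (M x y : ℝ) (hM : 2 ≤ M)
    (u : ℝ) (hu : u = (2:ℝ)^(E-52))
    (hxrep : ∃ k : ℤ, x = (k:ℝ) * u)
    (hyrep : ∃ c : ℤ, y = (c:ℝ) * (2 * u))
    (hround : |y - x * M| ≤ u) :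
    |x - y / M| ≤ u / M ∧ u / M ≤ u / 2 ∧ u / 2 < u ∧
    (2 < M → ∀ k' : ℤ, (k':ℝ) * u ≠ x → |y / M - x| < |y / M - (k':ℝ) * u|) := by
  have hu0 : (0:ℝ) < u := by rw [hu]; positivity
  have hM0 : (0:ℝ) < M := by linarith
  obtain ⟨k, hk⟩ := hxrep
  have hmain : |x - y / M| ≤ u / M := by
    have : x - y / M = (x * M - y) / M := by field_simp
    rw [this, abs_div, abs_of_pos hM0, abs_sub_comm]
    exact div_le_div_of_nonneg_right hround (le_of_lt hM0)
  refine ⟨hmain, ?_, by linarith, ?_⟩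
  · apply div_le_div_of_nonneg_left (le_of_lt hu0) (by norm_num) hM
  · intro h2 k' hne
    have hlt : |x - y / M| ≤ u / M := hmain
    have hkk : (1:ℝ) ≤ |(k':ℝ) - k| := by
      have : k' ≠ k := by
        intro h; apply hne; rw [h, hk]
      have h1 : (1:ℤ) ≤ |k' - k| := Int.one_le_abs (by omega)
      have : ((1:ℤ):ℝ) ≤ ((|k' - k| : ℤ) : ℝ) := by exact_mod_cast h1
      rw [Int.cast_abs] at this; push_cast at this; linarith [this]
    have hdist : u ≤ |(k':ℝ) * u - x| := by
      rw [hk, ← sub_mul, abs_mul, abs_of_pos hu0]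
      nlinarith
    have huM : u / M < u / 2 := by
      apply div_lt_div_of_pos_left hu0 (by norm_num) h2
    have htri : |(k':ℝ) * u - x| ≤ |y / M - (k':ℝ) * u| + |y / M - x| := by
      calc |(k':ℝ) * u - x| = |((k':ℝ) * u - y / M) + (y / M - x)| := by ring_nf
        _ ≤ |(k':ℝ) * u - y / M| + |y / M - x| := abs_add_le _ _
        _ = |y / M - (k':ℝ) * u| + |y / M - x| := by rw [abs_sub_comm]
    have h1 : |y / M - x| ≤ u / M := by rw [abs_sub_comm]; exact hmain
    have h2u : 2 * (u / M) < u := by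
      have := (div_lt_iff₀ hM0).mp huM
      nlinarith [mul_pos hu0 hM0]
    linarith
end

section
/- Even/odd separation injectivity: let E, D be fixed, let W > 0 with W < 2^E, and define on the grid G = {k·2^(E−52) : k ∈ ℤ} ∩ [2^(E+1) − W, 2^(E+1)) the map f(x) = x + A_even if the mantissa integer k is even, and f(x) = x + A_odd if k is odd, where A_even = 2^(E+1) + 2^(E−D) and A_odd = A_even − W, with A_even, A_odd, W all integer multiples of 2^(E−51). Suppose the image intervals [2^(E+2) − 2W + 2^(E−D), 2^(E+2) − W + 2^(E−D)) (odd branch) and [2^(E+2) − W + 2^(E−D), 2^(E+2) + 2^(E−D)) (even branch) are disjoint. Then all sums are exact (lossless) when the parity condition of each branch makes the trailing bit cancel — i.e., x + A_even with k even and A_even an even multiple of 2^(E−52) is a multiple of 2^(E−51), hence exactly representable in [2^(E+1), 2^(E+2)) — and f is injective, with the branch recoverable from whether f(x) > 2^(E+2) − W + 2^(E−D). -/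
/-- Even/odd separation: on the grid points `k·2^(E−52)` of the window
`[2^(E+1) − W, 2^(E+1))`, shift even-mantissa values by
`A_even = 2^(E+1) + 2^(E−D)` and odd ones by `A_odd = A_even − W`, all shifts
and `W` being multiples of `2^(E−51)`. If the two image intervals are
disjoint, then the even-branch sums are exactly representable (multiples of
`2^(E−51)`), the map is injective on the window, and the parity of the input
is recoverable from whether the image is `≥ 2^(E+2) − W + 2^(E−D)`. -/
theorem stmt_14 (E : ℤ) (D : ℕ) (W : ℝ) (hW0 : 0 < W) (hWE : W < (2:ℝ)^E)
    (Aeven Aodd : ℝ)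
    (hAe : Aeven = (2:ℝ)^(E+1) + (2:ℝ)^(E-(D:ℤ)))
    (hAo : Aodd = Aeven - W)
    (hAeGrid : ∃ a : ℤ, Aeven = (a:ℝ) * (2:ℝ)^(E-51))
    (hAoGrid : ∃ a : ℤ, Aodd = (a:ℝ) * (2:ℝ)^(E-51))
    (hWGrid : ∃ w : ℤ, W = (w:ℝ) * (2:ℝ)^(E-51))
    (f : ℤ → ℝ)
    (hf : ∀ k : ℤ, f k = (k:ℝ) * (2:ℝ)^(E-52) + (if Even k then Aeven else Aodd))
    (hdisj : Disjoint
      (Set.Ico ((2:ℝ)^(E+2) - 2*W + (2:ℝ)^(E-(D:ℤ))) ((2:ℝ)^(E+2) - W + (2:ℝ)^(E-(D:ℤ))))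
      (Set.Ico ((2:ℝ)^(E+2) - W + (2:ℝ)^(E-(D:ℤ))) ((2:ℝ)^(E+2) + (2:ℝ)^(E-(D:ℤ))))) :
    (∀ k : ℤ, Even k → ∃ c : ℤ, (k:ℝ) * (2:ℝ)^(E-52) + Aeven = (c:ℝ) * (2:ℝ)^(E-51)) ∧
    (∀ k k' : ℤ,
      (2:ℝ)^(E+1) - W ≤ (k:ℝ) * (2:ℝ)^(E-52) → (k:ℝ) * (2:ℝ)^(E-52) < (2:ℝ)^(E+1) →
      (2:ℝ)^(E+1) - W ≤ (k':ℝ) * (2:ℝ)^(E-52) → (k':ℝ) * (2:ℝ)^(E-52) < (2:ℝ)^(E+1) →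
      f k = f k' → k = k') ∧
    (∀ k : ℤ,
      (2:ℝ)^(E+1) - W ≤ (k:ℝ) * (2:ℝ)^(E-52) → (k:ℝ) * (2:ℝ)^(E-52) < (2:ℝ)^(E+1) →
      (Even k ↔ (2:ℝ)^(E+2) - W + (2:ℝ)^(E-(D:ℤ)) ≤ f k)) := by

  obtain ⟨a, ha⟩ := hAeGrid
  have h2 : (0:ℝ) < (2:ℝ)^(E-52) := by positivity
  have hpow : (2:ℝ)^(E-51) = 2 * (2:ℝ)^(E-52) := by
    rw [show E-51 = (E-52)+1 by ring, zpow_add₀ (by norm_num : (2:ℝ) ≠ 0)]; ring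
  have hpow2 : (2:ℝ)^(E+2) = (2:ℝ)^(E+1) + (2:ℝ)^(E+1) := by
    rw [show E+2 = (E+1)+1 by ring, zpow_add₀ (by norm_num : (2:ℝ) ≠ 0)]; ring
  have key : ∀ k : ℤ,
      (2:ℝ)^(E+1) - W ≤ (k:ℝ) * (2:ℝ)^(E-52) → (k:ℝ) * (2:ℝ)^(E-52) < (2:ℝ)^(E+1) →
      (Even k ↔ (2:ℝ)^(E+2) - W + (2:ℝ)^(E-(D:ℤ)) ≤ f k) := by
    intro k hlo hhi
    rw [hf k]
    by_cases hk : Even k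
    · rw [if_pos hk, hAe]
      exact iff_of_true hk (by linarith)
    · rw [if_neg hk, hAo, hAe]
      exact iff_of_false hk (by push_neg; linarith)
  refine ⟨?_, ?_, key⟩
  · rintro k ⟨m, hm⟩
    exact ⟨m + a, by rw [hm, ha, hpow]; push_cast; ring⟩
  · intro k k' hlo hhi hlo' hhi' hfe
    have hk := key k hlo hhi
    have hk' := key k' hlo' hhi'
    by_cases h : Even k
    · have h' : Even k' := hk'.mpr (hfe ▸ hk.mp h)
      rw [hf, hf, if_pos h, if_pos h'] at hfe
      exact_mod_cast mul_right_cancel₀ (ne_of_gt h2) (by linarith : (k:ℝ) * (2:ℝ)^(E-52) = (k':ℝ) * (2:ℝ)^(E-52))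
    · have h' : ¬ Even k' := fun he => h (hk.mpr (hfe ▸ hk'.mp he))
      rw [hf, hf, if_neg h, if_neg h'] at hfe
      exact_mod_cast mul_right_cancel₀ (ne_of_gt h2) (by linarith : (k:ℝ) * (2:ℝ)^(E-52) = (k':ℝ) * (2:ℝ)^(E-52))
end
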